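/- arXiv:2302.03344 — 5 statements merged into one kernel-verified Lean document; each statement's English description precedes it below -/
import Mathlib

section
/- Let a < l < b. Let x = (x₁, x₂) and y = (y₁, y₂) be functions from [a,b] to ℝ² such that x₂, y₂ are continuously differentiable on all of [a,b] and x₁, y₁ are piecewise C¹ with respect to l. Define (𝒥x)(z) := P₁ x′(z) = (−x₂′(z), −x₁′(z)) for z ∈ [a,b] \ {l} (derivatives taken piecewise), and likewise 𝒥y. Then ∫_a^b [⟨(𝒥x)(z), y(z)⟩ + ⟨x(z), (𝒥y)(z)⟩] dz (the integral split at l) equals [x(b)ᵀ P₁ y(b) − x(a)ᵀ P₁ y(a)] + x₂(l)·(y₁(l⁺) − y₁(l⁻)) + y₂(l)·(x₁(l⁺) − x₁(l⁻)). In particular the differential operator 𝒥 is formally skew-symmetric. -/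
/-!
On each of the pieces `[a, l]` and `[l, b]` all four components are `C¹`, and the integrand is
the derivative of `z ↦ x(z)ᵀ P₁ y(z) = -(x₁ y₂ + x₂ y₁)(z)`, because `P₁` is symmetric. The
fundamental theorem of calculus on both pieces leaves the boundary values at `a` and `b` plus the
difference of the one-sided values at `l`; since `x₂, y₂` are continuous at `l`, that difference
is the pair of jump terms.
-/

open Matrix

noncomputable def P1 : Matrix (Fin 2) (Fin 2) ℝ := !![0, -1; -1, 0]

theorem dotProduct_P1_mulVec (u₁ u₂ v₁ v₂ : ℝ) :
    ![u₁, u₂] ⬝ᵥ P1 *ᵥ ![v₁, v₂] = -(u₁ * v₂ + u₂ * v₁) := by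
  simp only [P1, dotProduct, mulVec, Fin.sum_univ_two, cons_val_zero, cons_val_one,
    of_apply, cons_val', empty_val', cons_val_fin_one]
  ring

theorem ContDiffOn.hasDerivAt_derivWithin {f : ℝ → ℝ} {s : Set ℝ} {z : ℝ}
    (hf : ContDiffOn ℝ 1 f s) (hs : s ∈ nhds z) : HasDerivAt f (derivWithin f s z) z :=
  ((hf.differentiableOn one_ne_zero z (mem_of_mem_nhds hs)).hasDerivWithinAt).hasDerivAt hs

section Piece

open Set

variable {x₁ x₂ y₁ y₂ : ℝ → ℝ} {s t : Set ℝ} {c d : ℝ}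

theorem integral_J_pairing_eq_sub (hcd : c ≤ d) (hs : UniqueDiffOn ℝ s) (ht : UniqueDiffOn ℝ t)
    (hcs : Icc c d ⊆ s) (hct : Icc c d ⊆ t)
    (hx₁ : ContDiffOn ℝ 1 x₁ t) (hx₂ : ContDiffOn ℝ 1 x₂ s)
    (hy₁ : ContDiffOn ℝ 1 y₁ t) (hy₂ : ContDiffOn ℝ 1 y₂ s) :
    ∫ z in c..d,
        ((-(derivWithin x₂ s z)) * y₁ z + (-(derivWithin x₁ t z)) * y₂ z
          + x₁ z * (-(derivWithin y₂ s z)) + x₂ z * (-(derivWithin y₁ t z)))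
      = ![x₁ d, x₂ d] ⬝ᵥ P1 *ᵥ ![y₁ d, y₂ d] - ![x₁ c, x₂ c] ⬝ᵥ P1 *ᵥ ![y₁ c, y₂ c] := by
  simp only [dotProduct_P1_mulVec]
  have hderiv : ∀ z ∈ Ioo c d, HasDerivAt (fun z ↦ -(x₁ z * y₂ z + x₂ z * y₁ z))
      ((-(derivWithin x₂ s z)) * y₁ z + (-(derivWithin x₁ t z)) * y₂ z
        + x₁ z * (-(derivWithin y₂ s z)) + x₂ z * (-(derivWithin y₁ t z))) z := by
    intro z hz
    have hzs : s ∈ nhds z := Filter.mem_of_superset (Icc_mem_nhds hz.1 hz.2) hcs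
    have hzt : t ∈ nhds z := Filter.mem_of_superset (Icc_mem_nhds hz.1 hz.2) hct
    refine ((((hx₁.hasDerivAt_derivWithin hzt).mul (hy₂.hasDerivAt_derivWithin hzs)).add
      ((hx₂.hasDerivAt_derivWithin hzs).mul (hy₁.hasDerivAt_derivWithin hzt))).neg).congr_deriv ?_
    ring
  have cx₁ := hx₁.continuousOn.mono hct
  have cx₂ := hx₂.continuousOn.mono hcs
  have cy₁ := hy₁.continuousOn.mono hct
  have cy₂ := hy₂.continuousOn.mono hcs
  have c'x₁ := (hx₁.continuousOn_derivWithin ht le_rfl).mono hct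
  have c'x₂ := (hx₂.continuousOn_derivWithin hs le_rfl).mono hcs
  have c'y₁ := (hy₁.continuousOn_derivWithin ht le_rfl).mono hct
  have c'y₂ := (hy₂.continuousOn_derivWithin hs le_rfl).mono hcs
  have hcont : ContinuousOn
      (fun z ↦ (-(derivWithin x₂ s z)) * y₁ z + (-(derivWithin x₁ t z)) * y₂ z
        + x₁ z * (-(derivWithin y₂ s z)) + x₂ z * (-(derivWithin y₁ t z))) (Icc c d) := by
    fun_prop
  have hF : ContinuousOn (fun z ↦ -(x₁ z * y₂ z + x₂ z * y₁ z)) (Icc c d) := by fun_prop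
  rw [intervalIntegral.integral_eq_sub_of_hasDerivAt_of_le hcd hF hderiv
    (hcont.intervalIntegrable_of_Icc hcd)]

end Piece

/-- Formal skew-symmetry of the differential operator
`𝒥x = P₁ x' = (-x₂', -x₁')` (derivatives taken piecewise with respect to the interface
position `l`).  Here `x = (x₁,x₂)`, `y = (y₁,y₂)`: the second components are `C¹` on
`[a,b]` and the first components are piecewise `C¹` with respect to `l`, with `C¹`
extensions `x1m, y1m` on `[a,l]` and `x1p, y1p` on `[l,b]`. -/
theorem stmt1 (a l b : ℝ) (hal : a < l) (hlb : l < b)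
    (x1 x2 y1 y2 x1m x1p y1m y1p : ℝ → ℝ)
    (hx2 : ContDiffOn ℝ 1 x2 (Set.Icc a b))
    (hy2 : ContDiffOn ℝ 1 y2 (Set.Icc a b))
    (hx1m : ContDiffOn ℝ 1 x1m (Set.Icc a l))
    (hx1p : ContDiffOn ℝ 1 x1p (Set.Icc l b))
    (hy1m : ContDiffOn ℝ 1 y1m (Set.Icc a l))
    (hy1p : ContDiffOn ℝ 1 y1p (Set.Icc l b))
    (hx1em : ∀ z ∈ Set.Ico a l, x1 z = x1m z)
    (hx1ep : ∀ z ∈ Set.Ioc l b, x1 z = x1p z)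
    (hy1em : ∀ z ∈ Set.Ico a l, y1 z = y1m z)
    (hy1ep : ∀ z ∈ Set.Ioc l b, y1 z = y1p z) :
    ((∫ z in a..l,
        ((-(derivWithin x2 (Set.Icc a b) z)) * y1 z
          + (-(derivWithin x1m (Set.Icc a l) z)) * y2 z
          + x1 z * (-(derivWithin y2 (Set.Icc a b) z))
          + x2 z * (-(derivWithin y1m (Set.Icc a l) z))))
      + (∫ z in l..b,
        ((-(derivWithin x2 (Set.Icc a b) z)) * y1 z
          + (-(derivWithin x1p (Set.Icc l b) z)) * y2 z
          + x1 z * (-(derivWithin y2 (Set.Icc a b) z))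
          + x2 z * (-(derivWithin y1p (Set.Icc l b) z)))))
    = (![x1 b, x2 b] ⬝ᵥ P1.mulVec ![y1 b, y2 b]
        - ![x1 a, x2 a] ⬝ᵥ P1.mulVec ![y1 a, y2 a])
      + x2 l * (y1p l - y1m l) + y2 l * (x1p l - x1m l) := by
  have hab := uniqueDiffOn_Icc (hal.trans hlb)
  have left := integral_J_pairing_eq_sub hal.le hab (uniqueDiffOn_Icc hal)
    (Set.Icc_subset_Icc_right hlb.le) subset_rfl hx1m hx2 hy1m hy2
  have right := integral_J_pairing_eq_sub hlb.le hab (uniqueDiffOn_Icc hlb)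
    (Set.Icc_subset_Icc_left hal.le) subset_rfl hx1p hx2 hy1p hy2
  rw [intervalIntegral.integral_congr_Ioo_of_le hal.le ?onLeft, left,
    intervalIntegral.integral_congr_Ioo_of_le hlb.le ?onRight, right,
    hx1em a ⟨le_rfl, hal⟩, hy1em a ⟨le_rfl, hal⟩, hx1ep b ⟨hlb, le_rfl⟩, hy1ep b ⟨hlb, le_rfl⟩]
  case onLeft =>
    intro z hz
    simp only [hx1em z (Set.Ioo_subset_Ico_self hz), hy1em z (Set.Ioo_subset_Ico_self hz)]
  case onRight =>
    intro z hz
    simp only [hx1ep z (Set.Ioo_subset_Ioc_self hz), hy1ep z (Set.Ioo_subset_Ioc_self hz)]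
  simp only [dotProduct_P1_mulVec]
  ring
end

section
/- Let a < l < b. Let u = (u₁, u₂) and v = (v₁, v₂) be functions from [a,b] to ℝ² such that u₂, v₂ are continuously differentiable on [a,b] and u₁, v₁ are piecewise C¹ with respect to l. Define (𝒥u)(z) := P₁ u′(z) for z ∈ [a,b] \ {l} (derivatives taken piecewise), and likewise 𝒥v. Then ∫_a^b [⟨(𝒥u)(z), v(z)⟩ + ⟨u(z), (𝒥v)(z)⟩] dz = ⟨e_∂(v), f_∂(u)⟩ + ⟨e_∂(u), f_∂(v)⟩ − f_I(u) e_I(v) − f_I(v) e_I(u). -/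
open Matrix

/-- Boundary flow `f_∂(u) = (1/√2) P₁ (u(b) - u(a))`. -/
noncomputable def fbd (ua ub : Fin 2 → ℝ) : Fin 2 → ℝ :=
  (Real.sqrt 2)⁻¹ • P1.mulVec (ub - ua)

/-- Boundary effort `e_∂(u) = (1/√2) (u(b) + u(a))`. -/
noncomputable def ebd (ua ub : Fin 2 → ℝ) : Fin 2 → ℝ :=
  (Real.sqrt 2)⁻¹ • (ub + ua)

open Set intervalIntegral
open scoped Interval

/-!
On each of `[a, l]` and `[l, b]` the integrand is minus the derivative of
`u₂ v₁ + u₁ v₂`, so by the product rule each integral is a difference of endpoint values of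
this bracket. At `a` and `b` these values make up the boundary port pairing; at the interface
`l` the contributions of the two sides do not cancel, since `u₁` and `v₁` jump there, and the
mismatch is exactly `f_I(u) e_I(v) + f_I(v) e_I(u)`.
-/

section ProductRule

variable {f g : ℝ → ℝ} {s t : Set ℝ} {a b : ℝ}

theorem ContDiffOn.hasDerivWithinAt_derivWithin_of_subset {x : ℝ} (hf : ContDiffOn ℝ 1 f s)
    (hts : t ⊆ s) (hx : x ∈ t) : HasDerivWithinAt f (derivWithin f s x) t x :=
  ((hf.differentiableOn one_ne_zero x (hts hx)).hasDerivWithinAt).mono hts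

theorem ContDiffOn.intervalIntegrable_derivWithin (hf : ContDiffOn ℝ 1 f s)
    (hs : UniqueDiffOn ℝ s) (has : [[a, b]] ⊆ s) :
    IntervalIntegrable (derivWithin f s) MeasureTheory.volume a b :=
  ((hf.continuousOn_derivWithin hs le_rfl).mono has).intervalIntegrable

variable (hf : ContDiffOn ℝ 1 f s) (hg : ContDiffOn ℝ 1 g t)
  (hs : UniqueDiffOn ℝ s) (ht : UniqueDiffOn ℝ t) (has : [[a, b]] ⊆ s) (hat : [[a, b]] ⊆ t)
include hf hg hs ht has hat

theorem intervalIntegrable_derivWithin_mul_add_mul_derivWithin :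
    IntervalIntegrable (fun x => derivWithin f s x * g x + f x * derivWithin g t x)
      MeasureTheory.volume a b :=
  ((hf.intervalIntegrable_derivWithin hs has).mul_continuousOn (hg.continuousOn.mono hat)).add
    ((hg.intervalIntegrable_derivWithin ht hat).continuousOn_mul (hf.continuousOn.mono has))

theorem integral_derivWithin_mul_add_mul_derivWithin :
    ∫ x in a..b, derivWithin f s x * g x + f x * derivWithin g t x = f b * g b - f a * g a :=
  integral_deriv_mul_eq_sub_of_hasDerivWithinAt
    (fun _ hx => hf.hasDerivWithinAt_derivWithin_of_subset has hx)
    (fun _ hx => hg.hasDerivWithinAt_derivWithin_of_subset hat hx)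
    (hf.intervalIntegrable_derivWithin hs has) (hg.intervalIntegrable_derivWithin ht hat)

end ProductRule

theorem integral_neg_derivWithin_bracket {p q f g : ℝ → ℝ} {s t : Set ℝ} {a b : ℝ}
    (hp : ContDiffOn ℝ 1 p s) (hq : ContDiffOn ℝ 1 q s)
    (hf : ContDiffOn ℝ 1 f t) (hg : ContDiffOn ℝ 1 g t)
    (hs : UniqueDiffOn ℝ s) (ht : UniqueDiffOn ℝ t) (has : [[a, b]] ⊆ s) (hat : [[a, b]] ⊆ t) :
    ∫ x in a..b, (-(derivWithin p s x)) * g x + (-(derivWithin f t x)) * q x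
        + f x * (-(derivWithin q s x)) + p x * (-(derivWithin g t x))
      = (p a * g a + f a * q a) - (p b * g b + f b * q b) := by
  have hpg := integral_derivWithin_mul_add_mul_derivWithin hp hg hs ht has hat
  have hfq := integral_derivWithin_mul_add_mul_derivWithin hf hq ht hs hat has
  have hsum := integral_add
    (intervalIntegrable_derivWithin_mul_add_mul_derivWithin hp hg hs ht has hat)
    (intervalIntegrable_derivWithin_mul_add_mul_derivWithin hf hq ht hs hat has)
  rw [hpg, hfq] at hsum
  rw [← neg_sub, ← sub_add_sub_comm, ← hsum, ← integral_neg]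
  congr 1 with x
  ring

theorem dotProduct_P1_mulVec_s3 (x y : Fin 2 → ℝ) : x ⬝ᵥ P1 *ᵥ y = -(x 0 * y 1 + x 1 * y 0) := by
  simp [P1, dotProduct, mulVec, Fin.sum_univ_two, add_comm]

theorem ebd_dotProduct_fbd_add_ebd_dotProduct_fbd (ua ub va vb : Fin 2 → ℝ) :
    ebd va vb ⬝ᵥ fbd ua ub + ebd ua ub ⬝ᵥ fbd va vb
      = ub ⬝ᵥ P1 *ᵥ vb - ua ⬝ᵥ P1 *ᵥ va := by
  have hsqrt : (Real.sqrt 2)⁻¹ * (Real.sqrt 2)⁻¹ = 2⁻¹ := by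
    rw [← mul_inv, Real.mul_self_sqrt zero_le_two]
  simp only [ebd, fbd, smul_dotProduct, dotProduct_smul, smul_eq_mul, dotProduct_P1_mulVec_s3,
    Pi.add_apply, Pi.sub_apply, ← mul_assoc, hsqrt]
  ring

/-- The skew-symmetry bracket of the operator `𝒥u = P₁ u'` (derivatives taken
piecewise with respect to the interface position `l`) expressed in terms of the boundary and
interface port variables.  Here `u = (u₁,u₂)`, `v = (v₁,v₂)`: the second components are `C¹`
on `[a,b]`, the first components are piecewise `C¹` with respect to `l` with `C¹` extensions
`u1m, v1m` on `[a,l]` and `u1p, v1p` on `[l,b]`; `f_I(u) = u₂(l)`,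
`e_I(u) = -(u₁(l⁺) - u₁(l⁻))`. -/
theorem stmt3 (a l b : ℝ) (hal : a < l) (hlb : l < b)
    (u1 u2 v1 v2 u1m u1p v1m v1p : ℝ → ℝ)
    (hu2 : ContDiffOn ℝ 1 u2 (Set.Icc a b))
    (hv2 : ContDiffOn ℝ 1 v2 (Set.Icc a b))
    (hu1m : ContDiffOn ℝ 1 u1m (Set.Icc a l))
    (hu1p : ContDiffOn ℝ 1 u1p (Set.Icc l b))
    (hv1m : ContDiffOn ℝ 1 v1m (Set.Icc a l))
    (hv1p : ContDiffOn ℝ 1 v1p (Set.Icc l b))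
    (hu1em : ∀ z ∈ Set.Ico a l, u1 z = u1m z)
    (hu1ep : ∀ z ∈ Set.Ioc l b, u1 z = u1p z)
    (hv1em : ∀ z ∈ Set.Ico a l, v1 z = v1m z)
    (hv1ep : ∀ z ∈ Set.Ioc l b, v1 z = v1p z) :
    ((∫ z in a..l,
        ((-(derivWithin u2 (Set.Icc a b) z)) * v1 z
          + (-(derivWithin u1m (Set.Icc a l) z)) * v2 z
          + u1 z * (-(derivWithin v2 (Set.Icc a b) z))
          + u2 z * (-(derivWithin v1m (Set.Icc a l) z))))
      + (∫ z in l..b,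
        ((-(derivWithin u2 (Set.Icc a b) z)) * v1 z
          + (-(derivWithin u1p (Set.Icc l b) z)) * v2 z
          + u1 z * (-(derivWithin v2 (Set.Icc a b) z))
          + u2 z * (-(derivWithin v1p (Set.Icc l b) z)))))
    = ebd ![v1 a, v2 a] ![v1 b, v2 b] ⬝ᵥ fbd ![u1 a, u2 a] ![u1 b, u2 b]
      + ebd ![u1 a, u2 a] ![u1 b, u2 b] ⬝ᵥ fbd ![v1 a, v2 a] ![v1 b, v2 b]
      - u2 l * (-(v1p l - v1m l)) - v2 l * (-(u1p l - u1m l)) := by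
  have hal' : [[a, l]] ⊆ Icc a b := by
    rw [uIcc_of_le hal.le]; exact Icc_subset_Icc_right hlb.le
  have hlb' : [[l, b]] ⊆ Icc a b := by
    rw [uIcc_of_le hlb.le]; exact Icc_subset_Icc_left hal.le
  have hab : UniqueDiffOn ℝ (Icc a b) := uniqueDiffOn_Icc (hal.trans hlb)
  rw [integral_congr_Ioo_of_le hal.le fun z hz => by
        rw [hu1em z (Ioo_subset_Ico_self hz), hv1em z (Ioo_subset_Ico_self hz)],
    integral_congr_Ioo_of_le hlb.le fun z hz => by
        rw [hu1ep z (Ioo_subset_Ioc_self hz), hv1ep z (Ioo_subset_Ioc_self hz)],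
    integral_neg_derivWithin_bracket hu2 hv2 hu1m hv1m hab (uniqueDiffOn_Icc hal) hal'
      (uIcc_of_le hal.le).subset,
    integral_neg_derivWithin_bracket hu2 hv2 hu1p hv1p hab (uniqueDiffOn_Icc hlb) hlb'
      (uIcc_of_le hlb.le).subset,
    ebd_dotProduct_fbd_add_ebd_dotProduct_fbd, dotProduct_P1_mulVec_s3, dotProduct_P1_mulVec_s3,
    hu1em a ⟨le_rfl, hal⟩, hv1em a ⟨le_rfl, hal⟩, hu1ep b ⟨hlb, le_rfl⟩, hv1ep b ⟨hlb, le_rfl⟩]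
  simp only [cons_val_zero, cons_val_one]
  ring
end

section
/- Let a < l < b, T > 0, and let Q⁻, Q⁺ : [a,b] → ℝ^{2×2} be continuously differentiable with symmetric values. Let x : [0,T] × [a,b] → ℝ² be such that (t,z) ↦ x(t,z) is continuously differentiable on [0,T] × [a,l] and on [0,T] × [l,b] (with one-sided limits at z = l), and suppose that for every t ∈ [0,T]: (i) x satisfies the conservation law ∂x/∂t(t,z) = P₁ ∂/∂z (Q_l x)(t,z) for all z ∈ [a,l) ∪ (l,b], and (ii) the second component of u(t) := Q_l(·) x(t,·) is continuous at z = l, i.e. (Q⁻x)₂(t,l⁻) = (Q⁺x)₂(t,l⁺). Then for all t ∈ [0,T]: d/dt ‖x(t,·)‖_{Q_l}² = ⟨e_∂(u(t)), f_∂(u(t))⟩ − e_I(u(t)) f_I(u(t)). That is, the change of the Hamiltonian H(x(t)) = ‖x(t)‖_{Q_l}² equals the power flow at the boundary and at the interface. -/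
open Matrix

/-!
On each side of the interface, symmetry of `Q` and `P₁` turns the conservation law into the local
balance `∂ₜ (xᵀ Q x) = 2 (Q x)ᵀ P₁ ∂_z (Q x) = ∂_z ((Q x)ᵀ P₁ (Q x))`, so differentiating under the
integral and integrating in `z` leaves only the values of `uᵀ P₁ u = -2 u₁ u₂` at the endpoints.
The contributions at `a` and `b` form `⟨e_∂, f_∂⟩`; those at `l⁻` and `l⁺` combine, since `u₂`
is continuous at `l`, into `-e_I f_I`.
-/

open Set MeasureTheory intervalIntegral

section DotProduct

variable {n : Type*} [Fintype n]

theorem Matrix.IsSymm.dotProduct_mulVec_comm {R : Type*} [CommSemiring R] {A : Matrix n n R}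
    (hA : A.IsSymm) (u v : n → R) : u ⬝ᵥ A *ᵥ v = A *ᵥ u ⬝ᵥ v := by
  rw [dotProduct_mulVec, ← vecMul_transpose, hA.eq]

theorem ContinuousOn.dotProduct {R X : Type*} [TopologicalSpace R] [Mul R] [AddCommMonoid R]
    [ContinuousAdd R] [ContinuousMul R] [TopologicalSpace X] {s : Set X} {f g : X → n → R}
    (hf : ContinuousOn f s) (hg : ContinuousOn g s) : ContinuousOn (fun x => f x ⬝ᵥ g x) s :=
  continuousOn_iff_continuous_domRestrict.2 <|
    (continuousOn_iff_continuous_domRestrict.1 hf).dotProduct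
      (continuousOn_iff_continuous_domRestrict.1 hg)

theorem ContinuousOn.matrix_mulVec {R X : Type*} [TopologicalSpace R]
    [NonUnitalNonAssocSemiring R] [ContinuousAdd R] [ContinuousMul R] [TopologicalSpace X]
    {s : Set X} {A : X → Matrix n n R} {f : X → n → R} (hA : ContinuousOn A s)
    (hf : ContinuousOn f s) : ContinuousOn (fun x => A x *ᵥ f x) s :=
  continuousOn_iff_continuous_domRestrict.2 <|
    (continuousOn_iff_continuous_domRestrict.1 hA).matrix_mulVec
      (continuousOn_iff_continuous_domRestrict.1 hf)

variable {𝕜 : Type*} [NontriviallyNormedField 𝕜] {s : Set 𝕜} {t : 𝕜}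

theorem HasDerivWithinAt.dotProduct {f g : 𝕜 → n → 𝕜} {f' g' : n → 𝕜}
    (hf : HasDerivWithinAt f f' s t) (hg : HasDerivWithinAt g g' s t) :
    HasDerivWithinAt (fun τ => f τ ⬝ᵥ g τ) (f' ⬝ᵥ g t + f t ⬝ᵥ g') s t := by
  unfold _root_.dotProduct
  rw [← Finset.sum_add_distrib]
  exact HasDerivWithinAt.fun_sum fun i _ =>
    (hasDerivWithinAt_pi.1 hf i).mul (hasDerivWithinAt_pi.1 hg i)

theorem HasDerivWithinAt.const_mulVec [CompleteSpace 𝕜] (A : Matrix n n 𝕜) {f : 𝕜 → n → 𝕜}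
    {f' : n → 𝕜} (hf : HasDerivWithinAt f f' s t) :
    HasDerivWithinAt (fun τ => A *ᵥ f τ) (A *ᵥ f') s t :=
  (LinearMap.toContinuousLinearMap A.mulVecLin).hasFDerivAt.comp_hasDerivWithinAt t hf

end DotProduct

theorem DifferentiableWithinAt.hasDerivWithinAt_fst_slice {E : Type*} [NormedAddCommGroup E]
    [NormedSpace ℝ E] {f : ℝ × ℝ → E} {s t : Set ℝ} {a b : ℝ}
    (hf : DifferentiableWithinAt ℝ f (s ×ˢ t) (a, b)) (hb : b ∈ t) :
    HasDerivWithinAt (fun x => f (x, b)) (fderivWithin ℝ f (s ×ˢ t) (a, b) (1, 0)) s a :=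
  hf.hasFDerivWithinAt.comp_hasDerivWithinAt a
    ((hasDerivWithinAt_id a s).prodMk (hasDerivWithinAt_const a s b)) fun _ hx => mk_mem_prod hx hb

theorem ContinuousOn.exists_continuous_eqOn_Icc_prod_Icc {X : Type*} [TopologicalSpace X]
    {G : ℝ × ℝ → X} {a b c d : ℝ} (hG : ContinuousOn G (Icc a b ×ˢ Icc c d)) (hab : a ≤ b)
    (hcd : c ≤ d) : ∃ G' : ℝ × ℝ → X, Continuous G' ∧ EqOn G' G (Icc a b ×ˢ Icc c d) :=
  ⟨fun p => G (projIcc a b hab p.1, projIcc c d hcd p.2),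
    hG.comp_continuous (by fun_prop) fun p => ⟨(projIcc a b hab p.1).2, (projIcc c d hcd p.2).2⟩,
    fun p hp => by simp [projIcc_of_mem hab hp.1, projIcc_of_mem hcd hp.2]⟩

section ParametricIntegral

variable {E : Type*} [NormedAddCommGroup E] [NormedSpace ℝ E]

theorem intervalIntegral.integral_eq_add_of_eqOn_Ioo {f g h : ℝ → E} {a l b : ℝ} (hal : a ≤ l)
    (hlb : l ≤ b) (hg : IntervalIntegrable g volume a l) (hh : IntervalIntegrable h volume l b)
    (hfg : EqOn f g (Ioo a l)) (hfh : EqOn f h (Ioo l b)) :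
    ∫ z in a..b, f z = (∫ z in a..l, g z) + ∫ z in l..b, h z := by
  rw [← integral_congr_Ioo_of_le hal hfg, ← integral_congr_Ioo_of_le hlb hfh]
  exact integral_add_adjacent_intervals (hg.congr_uIoo (uIoo_of_le hal ▸ hfg.symm))
    (hh.congr_uIoo (uIoo_of_le hlb ▸ hfh.symm)) |>.symm

variable [CompleteSpace E] {F G : ℝ → ℝ → E} {t₀ t₁ α β t : ℝ}

theorem hasDerivWithinAt_intervalIntegral_of_continuous (hαβ : α ≤ β)
    (hG : Continuous fun p : ℝ × ℝ => G p.1 p.2)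
    (hF : ∀ z ∈ Icc α β, ∀ s ∈ Icc t₀ t₁, HasDerivWithinAt (F · z) (G s z) (Icc t₀ t₁) s)
    (hF₀ : IntervalIntegrable (F t₀) volume α β) (ht : t ∈ Icc t₀ t₁) :
    HasDerivWithinAt (fun s => ∫ z in α..β, F s z) (∫ z in α..β, G t z) (Icc t₀ t₁) t := by
  have hFTC : ∀ s ∈ Icc t₀ t₁, ∀ z ∈ Icc α β, F s z = F t₀ z + ∫ σ in t₀..s, G σ z := by
    intro s hs z hz
    rw [integral_eq_sub_of_hasDerivAt_of_le hs.1
      (fun σ hσ => (hF z hz σ ⟨hσ.1, hσ.2.trans hs.2⟩).continuousWithinAt.mono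
        (Icc_subset_Icc_right hs.2))
      (fun σ hσ => (hF z hz σ ⟨hσ.1.le, hσ.2.le.trans hs.2⟩).hasDerivAt
        (Icc_mem_nhds hσ.1 (hσ.2.trans_le hs.2)))
      ((by fun_prop : Continuous fun σ => G σ z).intervalIntegrable _ _)]
    abel
  have hG' : Continuous fun p : ℝ × ℝ => G p.2 p.1 := hG.comp continuous_swap
  have hFubini : ∀ s ∈ Icc t₀ t₁, ∫ z in α..β, F s z =
      (∫ z in α..β, F t₀ z) + ∫ σ in t₀..s, ∫ z in α..β, G σ z := by
    intro s hs
    rw [integral_congr fun z hz => hFTC s hs z (by rwa [uIcc_of_le hαβ] at hz),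
      integral_add hF₀ ((continuous_parametric_intervalIntegral_of_continuous'
        (f := fun z σ => G σ z) hG' _ _).intervalIntegrable _ _),
      intervalIntegral_intervalIntegral_swap]
    exact (hG'.continuousOn.integrableOn_compact (μ := volume)
      (isCompact_uIcc.prod isCompact_uIcc)).mono_set (prod_mono uIoc_subset_uIcc uIoc_subset_uIcc)
  have hH : Continuous fun σ => ∫ z in α..β, G σ z :=
    continuous_parametric_intervalIntegral_of_continuous' hG _ _
  exact ((hH.integral_hasStrictDerivAt t₀ t).hasDerivAt.hasDerivWithinAt.const_add _).congr_of_mem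
    hFubini ht

theorem hasDerivWithinAt_intervalIntegral_of_continuousOn (hαβ : α ≤ β)
    (hG : ContinuousOn (fun p : ℝ × ℝ => G p.1 p.2) (Icc t₀ t₁ ×ˢ Icc α β))
    (hF : ∀ z ∈ Icc α β, ∀ s ∈ Icc t₀ t₁, HasDerivWithinAt (F · z) (G s z) (Icc t₀ t₁) s)
    (hF₀ : IntervalIntegrable (F t₀) volume α β) (ht : t ∈ Icc t₀ t₁) :
    HasDerivWithinAt (fun s => ∫ z in α..β, F s z) (∫ z in α..β, G t z) (Icc t₀ t₁) t := by
  obtain ⟨G', hG'c, hG'G⟩ := hG.exists_continuous_eqOn_Icc_prod_Icc (ht.1.trans ht.2) hαβ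
  have h := hasDerivWithinAt_intervalIntegral_of_continuous (G := fun s z => G' (s, z)) hαβ hG'c
    (fun z hz s hs => (hF z hz s hs).congr_deriv (hG'G (mk_mem_prod hs hz)).symm) hF₀ ht
  rwa [integral_congr fun z hz => hG'G (mk_mem_prod ht (by rwa [uIcc_of_le hαβ] at hz))] at h

end ParametricIntegral

theorem hasDerivWithinAt_integral_dotProduct_mulVec_of_conservationLaw {n : Type*} [Fintype n]
    {J : Matrix n n ℝ} (hJ : J.IsSymm) {Q : ℝ → Matrix n n ℝ} {y : ℝ → ℝ → n → ℝ}
    {t₀ t₁ α β t : ℝ} (ht₀₁ : t₀ < t₁) (hαβ : α < β)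
    (hQ : ContinuousOn Q (Icc α β)) (hQs : ∀ z ∈ Ioo α β, (Q z).IsSymm)
    (hy : ContDiffOn ℝ 1 (fun p : ℝ × ℝ => y p.1 p.2) (Icc t₀ t₁ ×ˢ Icc α β))
    (hlaw : ∀ t ∈ Icc t₀ t₁, ∀ z ∈ Ioo α β, ∃ w : n → ℝ,
      HasDerivWithinAt (fun ζ => Q ζ *ᵥ y t ζ) w (Icc α β) z ∧
      HasDerivWithinAt (fun s => y s z) (J *ᵥ w) (Icc t₀ t₁) t)
    (ht : t ∈ Icc t₀ t₁) :
    HasDerivWithinAt (fun s => ∫ z in α..β, y s z ⬝ᵥ Q z *ᵥ y s z)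
      (Q β *ᵥ y t β ⬝ᵥ J *ᵥ (Q β *ᵥ y t β) - Q α *ᵥ y t α ⬝ᵥ J *ᵥ (Q α *ᵥ y t α))
      (Icc t₀ t₁) t := by
  set S := Icc t₀ t₁ ×ˢ Icc α β
  set dty : ℝ → ℝ → n → ℝ := fun s z =>
    fderivWithin ℝ (fun p : ℝ × ℝ => y p.1 p.2) S (s, z) (1, 0)
  have hdty : ContinuousOn (fun p : ℝ × ℝ => dty p.1 p.2) S :=
    (hy.continuousOn_fderivWithin ((uniqueDiffOn_Icc ht₀₁).prod (uniqueDiffOn_Icc hαβ))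
      le_rfl).clm_apply continuousOn_const
  have hyt : ∀ z ∈ Icc α β, ∀ s ∈ Icc t₀ t₁,
      HasDerivWithinAt (fun s => y s z) (dty s z) (Icc t₀ t₁) s := fun z hz s hs =>
    (hy.differentiableOn one_ne_zero _ (mk_mem_prod hs hz)).hasDerivWithinAt_fst_slice hz
  have hyS : ContinuousOn (fun p : ℝ × ℝ => y p.1 p.2) S := hy.continuousOn
  have hQS : ContinuousOn (fun p : ℝ × ℝ => Q p.2) S := hQ.comp continuousOn_snd fun p hp => hp.2
  have hGS : ContinuousOn
      (fun p : ℝ × ℝ => dty p.1 p.2 ⬝ᵥ Q p.2 *ᵥ y p.1 p.2 + y p.1 p.2 ⬝ᵥ Q p.2 *ᵥ dty p.1 p.2) S :=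
    (hdty.dotProduct (hQS.matrix_mulVec hyS)).add (hyS.dotProduct (hQS.matrix_mulVec hdty))
  have hy_slice : ∀ s ∈ Icc t₀ t₁, ContinuousOn (y s) (Icc α β) := fun s hs =>
    ContinuousOn.uncurry_left (f := y) s hs hyS
  have hy₀ := hy_slice t₀ (left_mem_Icc.2 ht₀₁.le)
  refine (hasDerivWithinAt_intervalIntegral_of_continuousOn hαβ.le hGS
    (fun z hz s hs => (hyt z hz s hs).dotProduct ((hyt z hz s hs).const_mulVec (Q z)))
    ((hy₀.dotProduct (hQ.matrix_mulVec hy₀)).intervalIntegrable_of_Icc hαβ.le) ht).congr_deriv ?_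
  have hu : ContinuousOn (fun z => Q z *ᵥ y t z) (Icc α β) := hQ.matrix_mulVec (hy_slice t ht)
  apply integral_eq_sub_of_hasDerivAt_of_le hαβ.le
    (hu.dotProduct (continuousOn_const.matrix_mulVec hu))
  · intro z hz
    obtain ⟨w, hw, hyw⟩ := hlaw t ht z hz
    have hdtyw : dty t z = J *ᵥ w :=
      (uniqueDiffOn_Icc ht₀₁ t ht).eq_deriv _ (hyt z (Ioo_subset_Icc_self hz) t ht) hyw
    convert (hw.dotProduct (hw.const_mulVec J)).hasDerivAt (Icc_mem_nhds hz.1 hz.2) using 1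
    simp only [hdtyw]
    -- both sides are `2 (Q z *ᵥ y t z ⬝ᵥ J *ᵥ w)`
    rw [dotProduct_comm (J *ᵥ w), (hQs z hz).dotProduct_mulVec_comm, hJ.dotProduct_mulVec_comm w,
      dotProduct_comm (J *ᵥ w)]
  · exact (ContinuousOn.uncurry_left (f := fun s z =>
      dty s z ⬝ᵥ Q z *ᵥ y s z + y s z ⬝ᵥ Q z *ᵥ dty s z) t ht hGS).intervalIntegrable_of_Icc hαβ.le

theorem P1_isSymm : P1.IsSymm := by
  unfold Matrix.IsSymm P1
  ext i j
  fin_cases i <;> fin_cases j <;> rfl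

theorem dotProduct_P1_mulVec_self (u : Fin 2 → ℝ) : u ⬝ᵥ P1 *ᵥ u = -2 * (u 0 * u 1) := by
  simp [P1, dotProduct, mulVec, Fin.sum_univ_two]
  ring

theorem ebd_dotProduct_fbd (ua ub : Fin 2 → ℝ) :
    ebd ua ub ⬝ᵥ fbd ua ub = (ub ⬝ᵥ P1 *ᵥ ub - ua ⬝ᵥ P1 *ᵥ ua) / 2 := by
  have hsqrt : (Real.sqrt 2)⁻¹ * (Real.sqrt 2)⁻¹ = 1 / 2 := by
    rw [← mul_inv, Real.mul_self_sqrt zero_le_two, one_div]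
  simp only [ebd, fbd, smul_dotProduct, dotProduct_smul, smul_eq_mul, add_dotProduct, mulVec_sub,
    dotProduct_sub]
  rw [P1_isSymm.dotProduct_mulVec_comm ua ub, dotProduct_comm (P1 *ᵥ ua) ub]
  linear_combination (ub ⬝ᵥ P1 *ᵥ ub - ua ⬝ᵥ P1 *ᵥ ua) * hsqrt

/-- power balance equation.  Let `a < l < b`, `T > 0`, and let
`Q⁻, Q⁺ : [a,b] → ℝ^{2×2}` be `C¹` (entrywise) with symmetric values.  Let `x(t,z)` be given
on `[0,T] × ([a,l) ∪ (l,b])` by functions `xm`, `xp` that are `C¹` on `[0,T] × [a,l]` and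
`[0,T] × [l,b]` respectively (so `x` has one-sided limits at `z = l`).  Suppose that
(i) `x` satisfies the conservation law `∂x/∂t = P₁ ∂/∂z (Q_l x)` on `[a,l) ∪ (l,b]`
(derivatives taken within the respective domains), and (ii) the second component of
`u(t) = Q_l(·) x(t,·)` is continuous at `z = l`.  Then for every `t ∈ [0,T]` the derivative
of `t ↦ ‖x(t,·)‖_{Q_l}² = (1/2)∫_a^b x(t,z)ᵀ Q_l(z) x(t,z) dz` (within `[0,T]`) equals
`⟨e_∂(u(t)), f_∂(u(t))⟩ − e_I(u(t)) f_I(u(t))`, where `f_I(u(t)) = (Q⁺x)₂(t,l⁺)` and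
`e_I(u(t)) = -((Q⁺x)₁(t,l⁺) - (Q⁻x)₁(t,l⁻))`. -/
theorem stmt4 (a l b T : ℝ) (hal : a < l) (hlb : l < b) (hT : 0 < T)
    (Qm Qp : ℝ → Matrix (Fin 2) (Fin 2) ℝ)
    (hQm : ∀ i j, ContDiffOn ℝ 1 (fun z => Qm z i j) (Set.Icc a b))
    (hQp : ∀ i j, ContDiffOn ℝ 1 (fun z => Qp z i j) (Set.Icc a b))
    (hQsym : ∀ z ∈ Set.Icc a b, (Qm z).IsSymm ∧ (Qp z).IsSymm)
    (x xm xp : ℝ → ℝ → Fin 2 → ℝ)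
    (hxm : ContDiffOn ℝ 1 (fun p : ℝ × ℝ => xm p.1 p.2) (Set.Icc 0 T ×ˢ Set.Icc a l))
    (hxp : ContDiffOn ℝ 1 (fun p : ℝ × ℝ => xp p.1 p.2) (Set.Icc 0 T ×ˢ Set.Icc l b))
    (hxem : ∀ t ∈ Set.Icc (0:ℝ) T, ∀ z ∈ Set.Ico a l, x t z = xm t z)
    (hxep : ∀ t ∈ Set.Icc (0:ℝ) T, ∀ z ∈ Set.Ioc l b, x t z = xp t z)
    -- (i) the conservation law `∂x/∂t = P₁ ∂/∂z (Q_l x)` on `[a,l)` and on `(l,b]`: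
    (hpdem : ∀ t ∈ Set.Icc (0:ℝ) T, ∀ z ∈ Set.Ico a l, ∃ w : Fin 2 → ℝ,
      HasDerivWithinAt (fun ζ => (Qm ζ).mulVec (xm t ζ)) w (Set.Icc a l) z ∧
      HasDerivWithinAt (fun s => xm s z) (P1.mulVec w) (Set.Icc 0 T) t)
    (hpdep : ∀ t ∈ Set.Icc (0:ℝ) T, ∀ z ∈ Set.Ioc l b, ∃ w : Fin 2 → ℝ,
      HasDerivWithinAt (fun ζ => (Qp ζ).mulVec (xp t ζ)) w (Set.Icc l b) z ∧
      HasDerivWithinAt (fun s => xp s z) (P1.mulVec w) (Set.Icc 0 T) t)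
    -- (ii) continuity of the second component of `u(t) = Q_l x(t,·)` at the interface:
    (hcont : ∀ t ∈ Set.Icc (0:ℝ) T,
      ((Qm l).mulVec (xm t l)) 1 = ((Qp l).mulVec (xp t l)) 1) :
    ∀ t ∈ Set.Icc (0:ℝ) T,
      HasDerivWithinAt
        (fun s => (1/2) * ∫ z in a..b,
          x s z ⬝ᵥ ((if z < l then Qm z else Qp z)).mulVec (x s z))
        (ebd ((Qm a).mulVec (xm t a)) ((Qp b).mulVec (xp t b)) ⬝ᵥ
            fbd ((Qm a).mulVec (xm t a)) ((Qp b).mulVec (xp t b))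
          - (-(((Qp l).mulVec (xp t l)) 0 - ((Qm l).mulVec (xm t l)) 0))
              * (((Qp l).mulVec (xp t l)) 1))
        (Set.Icc 0 T) t := by
  intro t ht
  have hQm_al : ContinuousOn Qm (Icc a l) := (continuousOn_pi.2 fun i => continuousOn_pi.2 fun j =>
    (hQm i j).continuousOn).mono (Icc_subset_Icc_right hlb.le)
  have hQp_lb : ContinuousOn Qp (Icc l b) := (continuousOn_pi.2 fun i => continuousOn_pi.2 fun j =>
    (hQp i j).continuousOn).mono (Icc_subset_Icc_left hal.le)
  have hm := hasDerivWithinAt_integral_dotProduct_mulVec_of_conservationLaw P1_isSymm hT hal hQm_al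
    (fun z hz => (hQsym z ⟨hz.1.le, hz.2.le.trans hlb.le⟩).1) hxm
    (fun s hs z hz => hpdem s hs z (Ioo_subset_Ico_self hz)) ht
  have hp := hasDerivWithinAt_integral_dotProduct_mulVec_of_conservationLaw P1_isSymm hT hlb hQp_lb
    (fun z hz => (hQsym z ⟨hal.le.trans hz.1.le, hz.2.le⟩).2) hxp
    (fun s hs z hz => hpdep s hs z (Ioo_subset_Ioc_self hz)) ht
  have hsplit : ∀ s ∈ Icc (0:ℝ) T,
      (1/2) * ∫ z in a..b, x s z ⬝ᵥ (if z < l then Qm z else Qp z) *ᵥ x s z =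
        (1/2) * ((∫ z in a..l, xm s z ⬝ᵥ Qm z *ᵥ xm s z) +
          ∫ z in l..b, xp s z ⬝ᵥ Qp z *ᵥ xp s z) := by
    intro s hs
    have hxm_s := hxm.continuousOn.uncurry_left (f := xm) s hs
    have hxp_s := hxp.continuousOn.uncurry_left (f := xp) s hs
    rw [integral_eq_add_of_eqOn_Ioo hal.le hlb.le
      ((hxm_s.dotProduct (hQm_al.matrix_mulVec hxm_s)).intervalIntegrable_of_Icc hal.le)
      ((hxp_s.dotProduct (hQp_lb.matrix_mulVec hxp_s)).intervalIntegrable_of_Icc hlb.le)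
      (fun z hz => by rw [hxem s hs z (Ioo_subset_Ico_self hz), if_pos hz.2])
      (fun z hz => by rw [hxep s hs z (Ioo_subset_Ioc_self hz), if_neg hz.1.not_gt])]
  refine (((hm.add hp).const_mul (1/2 : ℝ)).congr_of_mem hsplit ht).congr_deriv ?_
  rw [ebd_dotProduct_fbd, dotProduct_P1_mulVec_self (Qm l *ᵥ xm t l),
    dotProduct_P1_mulVec_self (Qp l *ᵥ xp t l), hcont t ht]
  ring
end

section
/- Let a < l < 0 < b and let Q⁻, Q⁺ : [a,b] → ℝ^{2×2} be continuously differentiable with symmetric values. Let x : [a,b] → ℝ² have components that are piecewise C¹ with respect to l, and define (Ax)(z) := P₁ (d/dz)(Q_l x)(z) for z ∈ [a,b] \ {l} (derivatives taken piecewise). Then ⟨Ax, x⟩_{Q_0} = ⟨Ax, x⟩_{Q_l} + (1/2)∫_l^0 x(z)ᵀ (Q⁻(z) − Q⁺(z)) P₁ (d/dz)(Q⁺ x)(z) dz. -/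
open Matrix

/-- The operator `(Ax)(z) = P₁ (d/dz)(Q_l x)(z)` (derivatives taken piecewise with respect
to the interface position `l`), expressed through the `C¹` pieces `xm, xp` of `x` (with
derivatives `xm', xp'`) and the entrywise derivatives `Qm', Qp'` of `Q⁻, Q⁺`. -/
noncomputable def Aop (Qm Qp Qm' Qp' : ℝ → Matrix (Fin 2) (Fin 2) ℝ)
    (xm xp xm' xp' : ℝ → Fin 2 → ℝ) (l z : ℝ) : Fin 2 → ℝ :=
  if z < l then P1.mulVec ((Qm' z).mulVec (xm z) + (Qm z).mulVec (xm' z))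
  else P1.mulVec ((Qp' z).mulVec (xp z) + (Qp z).mulVec (xp' z))

open Set MeasureTheory

/-
The two pairings differ only in the weight on `[l, 0)`, where `Q_0 = Q⁻` but `Q_l = Q⁺`, and there
`Ax = P₁ (Q⁺x)'`. Hence the difference of the integrands is `xᵀ (Q⁻ − Q⁺) P₁ (Q⁺x)'` on `[l, 0)`
and zero elsewhere, and integrating this pointwise identity gives the formula. All integrands are
integrable because off the single point `l` they agree with functions continuous on closed
intervals.
-/

theorem ContinuousOn.intervalIntegrable_of_eqOn_Ioo {E : Type*} [NormedAddCommGroup E]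
    {f g : ℝ → E} {a b : ℝ} (hg : ContinuousOn g (Icc a b)) (hab : a ≤ b)
    (hfg : EqOn f g (Ioo a b)) : IntervalIntegrable f volume a b :=
  (intervalIntegrable_iff_integrableOn_Ioo_of_le hab).2 <|
    (hg.integrableOn_Icc.mono_set Ioo_subset_Icc_self).congr_fun hfg.symm measurableSet_Ioo

theorem intervalIntegrable_of_piecewise_continuousOn {E : Type*} [NormedAddCommGroup E]
    {f fm fp : ℝ → E} {a l b : ℝ} (hal : a ≤ l) (hlb : l ≤ b)
    (hfm : ContinuousOn fm (Icc a l)) (hfp : ContinuousOn fp (Icc l b))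
    (hffm : EqOn f fm (Ioo a l)) (hffp : EqOn f fp (Ioo l b)) :
    IntervalIntegrable f volume a b :=
  (hfm.intervalIntegrable_of_eqOn_Ioo hal hffm).trans (hfp.intervalIntegrable_of_eqOn_Ioo hlb hffp)

theorem intervalIntegral.integral_add_indicator_Ico {E : Type*} [NormedAddCommGroup E]
    [NormedSpace ℝ E] {g h : ℝ → E} {a c d b : ℝ} (hac : a ≤ c) (hcd : c ≤ d) (hdb : d ≤ b)
    (hg : IntervalIntegrable g volume a b) (hh : IntervalIntegrable h volume c d) :
    ∫ x in a..b, g x + (Ico c d).indicator h x = (∫ x in a..b, g x) + ∫ x in c..d, h x := by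
  have hab : a ≤ b := hac.trans (hcd.trans hdb)
  have hIoc : IntegrableOn h (Ioc c d) := (intervalIntegrable_iff_integrableOn_Ioc_of_le hcd).1 hh
  have hind : (Ico c d).indicator h =ᵐ[volume] (Ioc c d).indicator h :=
    indicator_ae_eq_of_ae_eq_set Ico_ae_eq_Ioc
  have hind_int : IntervalIntegrable ((Ioc c d).indicator h) volume a b :=
    ((integrable_indicator_iff measurableSet_Ioc).2 hIoc).intervalIntegrable
  rw [intervalIntegral.integral_add hg (hind_int.congr_ae (ae_restrict_of_ae hind.symm)),
    intervalIntegral.integral_congr_ae (hind.mono fun x hx _ => hx)]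
  congr 1
  rw [intervalIntegral.integral_of_le hab, intervalIntegral.integral_of_le hcd,
    MeasureTheory.integral_indicator measurableSet_Ioc, Measure.restrict_restrict measurableSet_Ioc,
    inter_eq_left.2 (Ioc_subset_Ioc hac hdb)]

section InterfaceShift

variable {Qm Qp Qm' Qp' : ℝ → Matrix (Fin 2) (Fin 2) ℝ} {x xm xp xm' xp' : ℝ → Fin 2 → ℝ}
  {a l b : ℝ}

theorem dotProduct_mulVec_Aop_eq_add_indicator (hl0 : l < 0) (z : ℝ) :
    x z ⬝ᵥ (if z < 0 then Qm z else Qp z) *ᵥ Aop Qm Qp Qm' Qp' xm xp xm' xp' l z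
      = x z ⬝ᵥ (if z < l then Qm z else Qp z) *ᵥ Aop Qm Qp Qm' Qp' xm xp xm' xp' l z
        + (Ico l 0).indicator
            (fun z => x z ⬝ᵥ ((Qm z - Qp z) * P1) *ᵥ (Qp' z *ᵥ xp z + Qp z *ᵥ xp' z)) z := by
  by_cases hzl : z < l
  · simp [hzl, hzl.trans hl0]
  by_cases hz0 : z < 0
  · simp only [Aop, hzl, hz0, if_true, if_false, indicator_of_mem (mem_Ico.2 ⟨not_lt.1 hzl, hz0⟩),
      ← mulVec_mulVec, sub_mulVec, dotProduct_sub, add_sub_cancel]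
  · simp [hzl, hz0]

theorem intervalIntegrable_dotProduct_mulVec_Aop (hal : a ≤ l) (hlb : l ≤ b)
    (hQm : ContinuousOn Qm (Icc a l)) (hQm' : ContinuousOn Qm' (Icc a l))
    (hQp : ContinuousOn Qp (Icc l b)) (hQp' : ContinuousOn Qp' (Icc l b))
    (hxm : ContinuousOn xm (Icc a l)) (hxm' : ContinuousOn xm' (Icc a l))
    (hxp : ContinuousOn xp (Icc l b)) (hxp' : ContinuousOn xp' (Icc l b))
    (hxem : EqOn x xm (Ioo a l)) (hxep : EqOn x xp (Ioo l b)) :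
    IntervalIntegrable (fun z => x z ⬝ᵥ (if z < l then Qm z else Qp z) *ᵥ
      Aop Qm Qp Qm' Qp' xm xp xm' xp' l z) volume a b := by
  refine intervalIntegrable_of_piecewise_continuousOn hal hlb
    (fm := fun z => xm z ⬝ᵥ Qm z *ᵥ P1 *ᵥ (Qm' z *ᵥ xm z + Qm z *ᵥ xm' z))
    (fp := fun z => xp z ⬝ᵥ Qp z *ᵥ P1 *ᵥ (Qp' z *ᵥ xp z + Qp z *ᵥ xp' z))
    (by fun_prop) (by fun_prop) (fun z hz => ?_) (fun z hz => ?_)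
  · simp only [Aop, hz.2, if_true, hxem hz]
  · simp only [Aop, not_lt.2 hz.1.le, if_false, hxep hz]

theorem intervalIntegrable_dotProduct_sub_mul_P1_mulVec {d : ℝ} (hld : l ≤ d)
    (hQm : ContinuousOn Qm (Icc l d)) (hQp : ContinuousOn Qp (Icc l d))
    (hQp' : ContinuousOn Qp' (Icc l d)) (hxp : ContinuousOn xp (Icc l d))
    (hxp' : ContinuousOn xp' (Icc l d)) (hxep : EqOn x xp (Ioo l d)) :
    IntervalIntegrable (fun z => x z ⬝ᵥ ((Qm z - Qp z) * P1) *ᵥ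
      (Qp' z *ᵥ xp z + Qp z *ᵥ xp' z)) volume l d :=
  ContinuousOn.intervalIntegrable_of_eqOn_Ioo
    (g := fun z => xp z ⬝ᵥ ((Qm z - Qp z) * P1) *ᵥ (Qp' z *ᵥ xp z + Qp z *ᵥ xp' z))
    (by fun_prop) hld fun z hz => by simp only [hxep hz]

end InterfaceShift

theorem stmt10_general (a l b : ℝ) (hal : a < l) (hl0 : l < 0) (h0b : 0 < b)
    (Qm Qp Qm' Qp' : ℝ → Matrix (Fin 2) (Fin 2) ℝ)
    (hQm : ∀ i j, ∀ z ∈ Set.Icc a b,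
      HasDerivWithinAt (fun ζ => Qm ζ i j) (Qm' z i j) (Set.Icc a b) z)
    (hQm' : ∀ i j, ContinuousOn (fun z => Qm' z i j) (Set.Icc a b))
    (hQp : ∀ i j, ∀ z ∈ Set.Icc a b,
      HasDerivWithinAt (fun ζ => Qp ζ i j) (Qp' z i j) (Set.Icc a b) z)
    (hQp' : ∀ i j, ContinuousOn (fun z => Qp' z i j) (Set.Icc a b))
    (x xm xp xm' xp' : ℝ → Fin 2 → ℝ)
    (hxem : ∀ z ∈ Set.Ico a l, x z = xm z)
    (hxep : ∀ z ∈ Set.Ioc l b, x z = xp z)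
    (hxm : ∀ z ∈ Set.Icc a l, HasDerivWithinAt xm (xm' z) (Set.Icc a l) z)
    (hxm' : ContinuousOn xm' (Set.Icc a l))
    (hxp : ∀ z ∈ Set.Icc l b, HasDerivWithinAt xp (xp' z) (Set.Icc l b) z)
    (hxp' : ContinuousOn xp' (Set.Icc l b)) :
    (1/2) * (∫ z in a..b, x z ⬝ᵥ ((if z < 0 then Qm z else Qp z)).mulVec
        (Aop Qm Qp Qm' Qp' xm xp xm' xp' l z))
    = (1/2) * (∫ z in a..b, x z ⬝ᵥ ((if z < l then Qm z else Qp z)).mulVec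
        (Aop Qm Qp Qm' Qp' xm xp xm' xp' l z))
      + (1/2) * ∫ z in l..(0:ℝ), x z ⬝ᵥ ((Qm z - Qp z) * P1).mulVec
          ((Qp' z).mulVec (xp z) + (Qp z).mulVec (xp' z)) := by
  have hlb : l ≤ b := (hl0.trans h0b).le
  have hal_ab : Icc a l ⊆ Icc a b := Icc_subset_Icc_right hlb
  have hlb_ab : Icc l b ⊆ Icc a b := Icc_subset_Icc_left hal.le
  have cQm : ContinuousOn Qm (Icc a b) :=
    continuousOn_pi.2 fun i => continuousOn_pi.2 fun j z hz => (hQm i j z hz).continuousWithinAt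
  have cQp : ContinuousOn Qp (Icc a b) :=
    continuousOn_pi.2 fun i => continuousOn_pi.2 fun j z hz => (hQp i j z hz).continuousWithinAt
  have cQm' : ContinuousOn Qm' (Icc a b) := continuousOn_pi.2 fun i => continuousOn_pi.2 (hQm' i)
  have cQp' : ContinuousOn Qp' (Icc a b) := continuousOn_pi.2 fun i => continuousOn_pi.2 (hQp' i)
  have cxm : ContinuousOn xm (Icc a l) := fun z hz => (hxm z hz).continuousWithinAt
  have cxp : ContinuousOn xp (Icc l b) := fun z hz => (hxp z hz).continuousWithinAt
  have hxep' : EqOn x xp (Ioo l b) := fun z hz => hxep z (Ioo_subset_Ioc_self hz)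
  have hg := intervalIntegrable_dotProduct_mulVec_Aop hal.le hlb (cQm.mono hal_ab)
    (cQm'.mono hal_ab) (cQp.mono hlb_ab) (cQp'.mono hlb_ab) cxm hxm' cxp hxp'
    (fun z hz => hxem z (Ioo_subset_Ico_self hz)) hxep'
  have hl0_ab : Icc l 0 ⊆ Icc a b := Icc_subset_Icc hal.le h0b.le
  have hh := intervalIntegrable_dotProduct_sub_mul_P1_mulVec hl0.le (cQm.mono hl0_ab)
    (cQp.mono hl0_ab) (cQp'.mono hl0_ab) (cxp.mono (Icc_subset_Icc_right h0b.le))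
    (hxp'.mono (Icc_subset_Icc_right h0b.le)) (hxep'.mono (Ioo_subset_Ioo_right h0b.le))
  rw [intervalIntegral.integral_congr fun z _ => dotProduct_mulVec_Aop_eq_add_indicator hl0 z,
    intervalIntegral.integral_add_indicator_Ico hal.le hl0.le h0b.le hg hh, mul_add]

/-- For `a < l < 0 < b`, `Q⁻, Q⁺` `C¹` with symmetric values and `x`
piecewise `C¹` with respect to `l`, with `(Ax)(z) = P₁ (d/dz)(Q_l x)(z)`:
`⟨Ax, x⟩_{Q_0} = ⟨Ax, x⟩_{Q_l} + (1/2)∫_l^0 xᵀ (Q⁻ − Q⁺) P₁ (d/dz)(Q⁺x) dz`,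
where `⟨u,v⟩_Q = (1/2)∫_a^b vᵀ Q u`. -/
theorem stmt10 (a l b : ℝ) (hal : a < l) (hl0 : l < 0) (h0b : 0 < b)
    (Qm Qp Qm' Qp' : ℝ → Matrix (Fin 2) (Fin 2) ℝ)
    (hQm : ∀ i j, ∀ z ∈ Set.Icc a b,
      HasDerivWithinAt (fun ζ => Qm ζ i j) (Qm' z i j) (Set.Icc a b) z)
    (hQm' : ∀ i j, ContinuousOn (fun z => Qm' z i j) (Set.Icc a b))
    (hQp : ∀ i j, ∀ z ∈ Set.Icc a b,
      HasDerivWithinAt (fun ζ => Qp ζ i j) (Qp' z i j) (Set.Icc a b) z)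
    (hQp' : ∀ i j, ContinuousOn (fun z => Qp' z i j) (Set.Icc a b))
    (hQsym : ∀ z ∈ Set.Icc a b, (Qm z).IsSymm ∧ (Qp z).IsSymm)
    (x xm xp xm' xp' : ℝ → Fin 2 → ℝ)
    (hxem : ∀ z ∈ Set.Ico a l, x z = xm z)
    (hxep : ∀ z ∈ Set.Ioc l b, x z = xp z)
    (hxm : ∀ z ∈ Set.Icc a l, HasDerivWithinAt xm (xm' z) (Set.Icc a l) z)
    (hxm' : ContinuousOn xm' (Set.Icc a l))
    (hxp : ∀ z ∈ Set.Icc l b, HasDerivWithinAt xp (xp' z) (Set.Icc l b) z)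
    (hxp' : ContinuousOn xp' (Set.Icc l b)) :
    (1/2) * (∫ z in a..b, x z ⬝ᵥ ((if z < 0 then Qm z else Qp z)).mulVec
        (Aop Qm Qp Qm' Qp' xm xp xm' xp' l z))
    = (1/2) * (∫ z in a..b, x z ⬝ᵥ ((if z < l then Qm z else Qp z)).mulVec
        (Aop Qm Qp Qm' Qp' xm xp xm' xp' l z))
      + (1/2) * ∫ z in l..(0:ℝ), x z ⬝ᵥ ((Qm z - Qp z) * P1).mulVec
          ((Qp' z).mulVec (xp z) + (Qp z).mulVec (xp' z)) :=
  stmt10_general a l b hal hl0 h0b Qm Qp Qm' Qp' hQm hQm' hQp hQp' x xm xp xm' xp' hxem hxep hxm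
    hxm' hxp hxp'
end

section
/- Let a < 0 < b and let Q⁻, Q⁺ ∈ C¹([a,b], ℝ^{2×2}) be diagonal, Q^±(z) = diag(q₁₁^±(z), q₂₂^±(z)), with m I₂ ≤ Q^±(z) ≤ M I₂ for all z ∈ [a,b] and some 0 < m ≤ M, and satisfying q₁₁⁺(0)/q₁₁⁻(0) = 1 and q₁₁⁺(z)/q₁₁⁻(z) = q₂₂⁺(z)/q₂₂⁻(z) for all z ∈ [a,b]. Then there exists ω > 0, depending only on Q⁻, Q⁺, a, b, such that the following holds for every interface position l ∈ (a,b): for every x : [a,b] → ℝ² whose components are piecewise C¹ with respect to l and whose second component satisfies the interface condition (Q_l x)₂(l⁺) = 0 = (Q_l x)₂(l⁻), and which satisfies the frozen-interface dissipativity ⟨Ax, x⟩_{Q_l} ≤ 0 where (Ax)(z) := P₁ (d/dz)(Q_l x)(z) for z ∈ [a,b] \ {l} (derivatives taken piecewise), one has ⟨Ax, x⟩_{Q_0} ≤ ω ‖x‖_{Q_0}². -/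
open Matrix

/-!
For diagonal `Q` and `g = Q y`, the integrand `yᵀ W P₁ g'` with a weight `W = ρ Q` (`ρ` scalar)
equals `-ρ (g₁ g₂)'`. With the frozen weight `Q_l` (so `ρ = 1` on each side of `l`) the integral
therefore telescopes. The fixed weight `Q_0` differs from `Q_l` only between `0` and `l`, and
there the ratio condition gives `Q_0 = ρ Q_l` with `ρ = q₁₁⁺/q₁₁⁻` or its inverse. Integrating
by parts, the boundary terms are those of the `Q_l` computation, because `ρ(0) = 1` and the
interface condition kills `g₁ g₂` at `l`; what remains is `∫ ρ' g₁ g₂`. Since `|g₁ g₂| ≤ M² |y|²/2`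
and `m |y|² ≤ yᵀ Q_0 y`, this is at most `K M²/(2m) · ‖x‖²_{Q_0}`, where `K` bounds `|ρ'|` on
`[a,b]` independently of `l`.
-/

open MeasureTheory Set intervalIntegral

def HasContinuousDerivOn {E : Type*} [NormedAddCommGroup E] [NormedSpace ℝ E]
    (f f' : ℝ → E) (s : Set ℝ) : Prop :=
  (∀ z ∈ s, HasDerivWithinAt f (f' z) s z) ∧ ContinuousOn f' s

namespace HasContinuousDerivOn

variable {E : Type*} [NormedAddCommGroup E] [NormedSpace ℝ E] {f f' : ℝ → E} {s t : Set ℝ}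

theorem mono (h : HasContinuousDerivOn f f' s) (hts : t ⊆ s) : HasContinuousDerivOn f f' t :=
  ⟨fun z hz => (h.1 z (hts hz)).mono hts, h.2.mono hts⟩

theorem continuousOn (h : HasContinuousDerivOn f f' s) : ContinuousOn f s :=
  fun z hz => (h.1 z hz).continuousWithinAt

theorem apply {ι : Type*} [Fintype ι] {y y' : ℝ → ι → ℝ} (h : HasContinuousDerivOn y y' s)
    (i : ι) : HasContinuousDerivOn (fun z => y z i) (fun z => y' z i) s :=
  ⟨fun z hz => hasDerivWithinAt_pi.1 (h.1 z hz) i, (continuous_apply i).comp_continuousOn h.2⟩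

theorem mul {u u' v v' : ℝ → ℝ} (hu : HasContinuousDerivOn u u' s)
    (hv : HasContinuousDerivOn v v' s) :
    HasContinuousDerivOn (fun z => u z * v z) (fun z => u' z * v z + u z * v' z) s :=
  ⟨fun z hz => (hu.1 z hz).mul (hv.1 z hz),
    (hu.2.mul hv.continuousOn).add (hu.continuousOn.mul hv.2)⟩

theorem div {u u' v v' : ℝ → ℝ} (hu : HasContinuousDerivOn u u' s)
    (hv : HasContinuousDerivOn v v' s) (hv0 : ∀ z ∈ s, v z ≠ 0) :
    HasContinuousDerivOn (fun z => u z / v z) (fun z => (u' z * v z - u z * v' z) / v z ^ 2) s :=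
  ⟨fun z hz => (hu.1 z hz).div (hv.1 z hz) (hv0 z hz),
    ((hu.2.mul hv.continuousOn).sub (hu.continuousOn.mul hv.2)).div (hv.continuousOn.pow 2)
      fun z hz => pow_ne_zero 2 (hv0 z hz)⟩

theorem mulVec {ι κ : Type*} [Fintype ι] [Fintype κ] {Q Q' : ℝ → Matrix κ ι ℝ}
    {y y' : ℝ → ι → ℝ}
    (hQ : ∀ i j, HasContinuousDerivOn (fun z => Q z i j) (fun z => Q' z i j) s)
    (hy : HasContinuousDerivOn y y' s) :
    HasContinuousDerivOn (fun z => Q z *ᵥ y z) (fun z => Q' z *ᵥ y z + Q z *ᵥ y' z) s := by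
  refine ⟨fun z hz => hasDerivWithinAt_pi.2 fun i => ?_, continuousOn_pi.2 fun i => ?_⟩
  · simp only [Matrix.mulVec, dotProduct, Pi.add_apply, ← Finset.sum_add_distrib]
    exact HasDerivWithinAt.fun_sum fun j _ => ((hQ i j).mul (hy.apply j)).1 z hz
  · simp only [Matrix.mulVec, dotProduct, Pi.add_apply, ← Finset.sum_add_distrib]
    exact continuousOn_finsetSum _ fun j _ => ((hQ i j).mul (hy.apply j)).2

end HasContinuousDerivOn

theorem le_dotProduct_mulVec_of_posSemidef_sub {n : Type*} [Fintype n] [DecidableEq n]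
    {A : Matrix n n ℝ} {c : ℝ} (h : (A - c • (1 : Matrix n n ℝ)).PosSemidef) (v : n → ℝ) :
    c * (v ⬝ᵥ v) ≤ v ⬝ᵥ A *ᵥ v := by
  have := h.dotProduct_mulVec_nonneg v
  simp only [star_trivial, sub_mulVec, smul_mulVec, one_mulVec, dotProduct_sub,
    dotProduct_smul, smul_eq_mul] at this
  linarith

theorem Matrix.IsDiag.mulVec_apply {n : Type*} [Fintype n] [DecidableEq n] {A : Matrix n n ℝ}
    (hA : A.IsDiag) (v : n → ℝ) (i : n) : (A *ᵥ v) i = A i i * v i := by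
  rw [← hA.diagonal_diag, mulVec_diagonal, diagonal_apply_eq]

theorem dotProduct_mulVec_P1_mulVec {V : Matrix (Fin 2) (Fin 2) ℝ} (hV : V.IsDiag) {r : ℝ}
    {v g u : Fin 2 → ℝ} (hr : ∀ i, V i i * v i = r * g i) :
    v ⬝ᵥ V *ᵥ (P1 *ᵥ u) = -(r * (u 0 * g 1 + g 0 * u 1)) := by
  have h01 : V 0 1 = 0 := hV (by decide)
  have h10 : V 1 0 = 0 := hV (by decide)
  simp only [P1, mulVec, dotProduct, Fin.sum_univ_two, h01, h10, Fin.isValue, of_apply,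
    cons_val', cons_val_zero, cons_val_one, cons_val_fin_one, zero_mul, neg_mul, one_mul, zero_add,
    mul_neg, add_zero, neg_zero]
  linear_combination (-u 1) * hr 0 + (-u 0) * hr 1

theorem dotProduct_mulVec_P1_mulVec_of_div_eq {Q W : Matrix (Fin 2) (Fin 2) ℝ}
    (hQ : Q.IsDiag) (hW : W.IsDiag) (hQ₀ : Q 0 0 ≠ 0) (hQ₁ : Q 1 1 ≠ 0)
    (hratio : W 0 0 / Q 0 0 = W 1 1 / Q 1 1) (v u : Fin 2 → ℝ) :
    v ⬝ᵥ W *ᵥ (P1 *ᵥ u) = -(W 0 0 / Q 0 0 * (u 0 * (Q *ᵥ v) 1 + (Q *ᵥ v) 0 * u 1)) := by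
  refine dotProduct_mulVec_P1_mulVec hW fun i => ?_
  rw [hQ.mulVec_apply]
  match i with
  | 0 => field_simp
  | 1 => rw [hratio]; field_simp

theorem mul_mul_le_of_abs_le {m M K σ g₀ g₁ y₀ y₁ E : ℝ} (hm : 0 < m) (hσ : |σ| ≤ K)
    (hg₀ : |g₀| ≤ M * |y₀|) (hg₁ : |g₁| ≤ M * |y₁|) (hE : m * (y₀ ^ 2 + y₁ ^ 2) ≤ E) :
    σ * (g₀ * g₁) ≤ K * M ^ 2 / (2 * m) * E := by
  have hK : 0 ≤ K := (abs_nonneg σ).trans hσ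
  calc σ * (g₀ * g₁) ≤ |σ| * (|g₀| * |g₁|) := by rw [← abs_mul, ← abs_mul]; exact le_abs_self _
    _ ≤ K * ((M * |y₀|) * (M * |y₁|)) := by
      gcongr
      exact (abs_nonneg _).trans hg₀
    _ = K * M ^ 2 * (|y₀| * |y₁|) := by ring
    _ ≤ K * M ^ 2 * ((y₀ ^ 2 + y₁ ^ 2) / 2) := by
      gcongr
      nlinarith [two_mul_le_add_sq |y₀| |y₁|, sq_abs y₀, sq_abs y₁]
    _ = K * M ^ 2 / (2 * m) * (m * (y₀ ^ 2 + y₁ ^ 2)) := by field_simp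
    _ ≤ K * M ^ 2 / (2 * m) * E := by gcongr

theorem integral_eq_of_eqOn_neg_mul_deriv {c d : ℝ} (hcd : c ≤ d) {ρ σ F D f : ℝ → ℝ}
    (hρ : HasContinuousDerivOn ρ σ (Icc c d)) (hF : HasContinuousDerivOn F D (Icc c d))
    (hf : EqOn f (fun z => -(ρ z * D z)) (Ioo c d)) :
    IntervalIntegrable f volume c d ∧
      ∫ z in c..d, f z = (∫ z in c..d, σ z * F z) + (ρ c * F c - ρ d * F d) := by
  rw [← uIcc_of_le hcd] at hρ hF
  rw [← uIoo_of_le hcd] at hf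
  have hρD : ContinuousOn (fun z => -(ρ z * D z)) (uIcc c d) := (hρ.continuousOn.mul hF.2).neg
  refine ⟨hρD.intervalIntegrable.congr_uIoo hf.symm, ?_⟩
  rw [integral_congr_uIoo hf, intervalIntegral.integral_neg,
    integral_mul_deriv_eq_deriv_mul_of_hasDerivWithinAt hρ.1 hF.1
      hρ.2.intervalIntegrable hF.2.intervalIntegrable]
  ring

def IntervalBound (ω : ℝ) (f g E : ℝ → ℝ) (c d : ℝ) : Prop :=
  IntervalIntegrable f volume c d ∧ IntervalIntegrable g volume c d ∧
    IntervalIntegrable E volume c d ∧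
    ∫ z in c..d, f z ≤ (∫ z in c..d, g z) + ω * ∫ z in c..d, E z

theorem IntervalBound.trans {ω c d e : ℝ} {f g E : ℝ → ℝ} (h₁ : IntervalBound ω f g E c d)
    (h₂ : IntervalBound ω f g E d e) : IntervalBound ω f g E c e := by
  obtain ⟨hf₁, hg₁, hE₁, h₁⟩ := h₁
  obtain ⟨hf₂, hg₂, hE₂, h₂⟩ := h₂
  refine ⟨hf₁.trans hf₂, hg₁.trans hg₂, hE₁.trans hE₂, ?_⟩
  rw [← integral_add_adjacent_intervals hf₁ hf₂, ← integral_add_adjacent_intervals hg₁ hg₂,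
    ← integral_add_adjacent_intervals hE₁ hE₂]
  linarith

structure AdmissibleCoeff (a b m M : ℝ) (Q Q' : ℝ → Matrix (Fin 2) (Fin 2) ℝ) : Prop where
  hasContinuousDerivOn :
    ∀ i j, HasContinuousDerivOn (fun z => Q z i j) (fun z => Q' z i j) (Icc a b)
  isDiag : ∀ z ∈ Icc a b, (Q z).IsDiag
  lower : ∀ z ∈ Icc a b, (Q z - m • (1 : Matrix (Fin 2) (Fin 2) ℝ)).PosSemidef
  upper : ∀ z ∈ Icc a b, (M • (1 : Matrix (Fin 2) (Fin 2) ℝ) - Q z).PosSemidef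

def flux (Q : ℝ → Matrix (Fin 2) (Fin 2) ℝ) (y : ℝ → Fin 2 → ℝ) (z : ℝ) : ℝ :=
  (Q z *ᵥ y z) 0 * (Q z *ᵥ y z) 1

noncomputable def ratioDeriv (W W' Q Q' : ℝ → Matrix (Fin 2) (Fin 2) ℝ) (z : ℝ) : ℝ :=
  (W' z 0 0 * Q z 0 0 - W z 0 0 * Q' z 0 0) / Q z 0 0 ^ 2

theorem ratioDeriv_self (Q Q' : ℝ → Matrix (Fin 2) (Fin 2) ℝ) (z : ℝ) :
    ratioDeriv Q Q' Q Q' z = 0 := by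
  simp [ratioDeriv, mul_comm]

namespace AdmissibleCoeff

variable {a b c d m M : ℝ} {Q Q' W W' W₀ : ℝ → Matrix (Fin 2) (Fin 2) ℝ}
  {x y y' A : ℝ → Fin 2 → ℝ}

theorem le_apply (hQ : AdmissibleCoeff a b m M Q Q') {z : ℝ} (hz : z ∈ Icc a b) (i : Fin 2) :
    m ≤ Q z i i := by
  simpa using (hQ.lower z hz).diag_nonneg (i := i)

theorem apply_le (hQ : AdmissibleCoeff a b m M Q Q') {z : ℝ} (hz : z ∈ Icc a b) (i : Fin 2) :
    Q z i i ≤ M := by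
  simpa using (hQ.upper z hz).diag_nonneg (i := i)

theorem apply_pos (hQ : AdmissibleCoeff a b m M Q Q') (hm : 0 < m) {z : ℝ} (hz : z ∈ Icc a b)
    (i : Fin 2) : 0 < Q z i i :=
  hm.trans_le (hQ.le_apply hz i)

theorem abs_mulVec_apply_le (hQ : AdmissibleCoeff a b m M Q Q') (hm : 0 < m) {z : ℝ}
    (hz : z ∈ Icc a b) (v : Fin 2 → ℝ) (i : Fin 2) : |(Q z *ᵥ v) i| ≤ M * |v i| := by
  rw [(hQ.isDiag z hz).mulVec_apply, abs_mul, abs_of_pos (hQ.apply_pos hm hz i)]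
  exact mul_le_mul_of_nonneg_right (hQ.apply_le hz i) (abs_nonneg _)

theorem ratioDeriv_mul_flux_le (hQ : AdmissibleCoeff a b m M Q Q')
    (hW : AdmissibleCoeff a b m M W W') (hm : 0 < m) {K z : ℝ} (hz : z ∈ Icc a b)
    (hK : |ratioDeriv W W' Q Q' z| ≤ K) :
    ratioDeriv W W' Q Q' z * flux Q y z ≤ K * M ^ 2 / (2 * m) * (y z ⬝ᵥ W z *ᵥ y z) := by
  refine mul_mul_le_of_abs_le hm hK (hQ.abs_mulVec_apply_le hm hz _ 0)
    (hQ.abs_mulVec_apply_le hm hz _ 1) ?_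
  simpa [dotProduct, Fin.sum_univ_two, sq] using
    le_dotProduct_mulVec_of_posSemidef_sub (hW.lower z hz) (y z)

theorem ratioDeriv_continuousOn (hQ : AdmissibleCoeff a b m M Q Q')
    (hW : AdmissibleCoeff a b m M W W') (hm : 0 < m) :
    ContinuousOn (ratioDeriv W W' Q Q') (Icc a b) :=
  ((hW.hasContinuousDerivOn 0 0).div (hQ.hasContinuousDerivOn 0 0)
    fun _ hz => (hQ.apply_pos hm hz 0).ne').2

theorem hasContinuousDerivOn_mulVec (hQ : AdmissibleCoeff a b m M Q Q')
    (hsub : Icc c d ⊆ Icc a b) (hy : HasContinuousDerivOn y y' (Icc c d)) :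
    HasContinuousDerivOn (fun z => Q z *ᵥ y z) (fun z => Q' z *ᵥ y z + Q z *ᵥ y' z) (Icc c d) :=
  .mulVec (fun i j => (hQ.hasContinuousDerivOn i j).mono hsub) hy

theorem integral_dotProduct_mulVec_eq (hQ : AdmissibleCoeff a b m M Q Q')
    (hW : AdmissibleCoeff a b m M W W') (hm : 0 < m) (hcd : c ≤ d) (hsub : Icc c d ⊆ Icc a b)
    (hy : HasContinuousDerivOn y y' (Icc c d))
    (hratio : ∀ z ∈ Ioo c d, W z 0 0 / Q z 0 0 = W z 1 1 / Q z 1 1)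
    (hpt : ∀ z ∈ Ioo c d, x z = y z ∧ A z = P1 *ᵥ (Q' z *ᵥ y z + Q z *ᵥ y' z) ∧ W₀ z = W z) :
    IntervalIntegrable (fun z => x z ⬝ᵥ W₀ z *ᵥ A z) volume c d ∧
      ∫ z in c..d, x z ⬝ᵥ W₀ z *ᵥ A z =
        (∫ z in c..d, ratioDeriv W W' Q Q' z * flux Q y z) +
          (W c 0 0 / Q c 0 0 * flux Q y c - W d 0 0 / Q d 0 0 * flux Q y d) := by
  have hρ := ((hW.hasContinuousDerivOn 0 0).mono hsub).div
    ((hQ.hasContinuousDerivOn 0 0).mono hsub) fun z hz => (hQ.apply_pos hm (hsub hz) 0).ne'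
  have hg := hQ.hasContinuousDerivOn_mulVec hsub hy
  refine integral_eq_of_eqOn_neg_mul_deriv hcd hρ ((hg.apply 0).mul (hg.apply 1)) fun z hz => ?_
  obtain ⟨hx, hA, hW₀⟩ := hpt z hz
  have hzI := hsub (Ioo_subset_Icc_self hz)
  simp only [hx, hA, hW₀]
  exact dotProduct_mulVec_P1_mulVec_of_div_eq (hQ.isDiag z hzI) (hW.isDiag z hzI)
    (hQ.apply_pos hm hzI 0).ne' (hQ.apply_pos hm hzI 1).ne' (hratio z hz) _ _

theorem intervalBound (hQ : AdmissibleCoeff a b m M Q Q') (hW : AdmissibleCoeff a b m M W W')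
    (hm : 0 < m) {K : ℝ} (hcd : c ≤ d) (hsub : Icc c d ⊆ Icc a b)
    (hy : HasContinuousDerivOn y y' (Icc c d))
    (hratio : ∀ z ∈ Ioo c d, W z 0 0 / Q z 0 0 = W z 1 1 / Q z 1 1)
    (hK : ∀ z ∈ Ioo c d, |ratioDeriv W W' Q Q' z| ≤ K)
    (hc : W c 0 0 / Q c 0 0 = 1 ∨ flux Q y c = 0) (hd : W d 0 0 / Q d 0 0 = 1 ∨ flux Q y d = 0)
    {Wₗ : ℝ → Matrix (Fin 2) (Fin 2) ℝ}
    (hpt : ∀ z ∈ Ioo c d, x z = y z ∧ A z = P1 *ᵥ (Q' z *ᵥ y z + Q z *ᵥ y' z) ∧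
      Wₗ z = Q z ∧ W₀ z = W z) :
    IntervalBound (K * M ^ 2 / (2 * m)) (fun z => x z ⬝ᵥ W₀ z *ᵥ A z)
      (fun z => x z ⬝ᵥ Wₗ z *ᵥ A z) (fun z => x z ⬝ᵥ W₀ z *ᵥ x z) c d := by
  have hQ_div_self : ∀ z ∈ Icc c d, ∀ i, Q z i i / Q z i i = 1 :=
    fun z hz i => div_self (hQ.apply_pos hm (hsub hz) i).ne'
  obtain ⟨hf₀, hf₀_eq⟩ := hQ.integral_dotProduct_mulVec_eq hW hm hcd hsub hy hratio
    fun z hz => ⟨(hpt z hz).1, (hpt z hz).2.1, (hpt z hz).2.2.2⟩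
  obtain ⟨hfₗ, hfₗ_eq⟩ := hQ.integral_dotProduct_mulVec_eq hQ hm hcd hsub hy
    (fun z hz => by
      rw [hQ_div_self z (Ioo_subset_Icc_self hz), hQ_div_self z (Ioo_subset_Icc_self hz)])
    fun z hz => ⟨(hpt z hz).1, (hpt z hz).2.1, (hpt z hz).2.2.1⟩
  have hE_eq : ∀ z ∈ Ioo c d, x z ⬝ᵥ W₀ z *ᵥ x z = y z ⬝ᵥ W z *ᵥ y z :=
    fun z hz => by rw [(hpt z hz).1, (hpt z hz).2.2.2]
  have hE : IntervalIntegrable (fun z => x z ⬝ᵥ W₀ z *ᵥ x z) volume c d := by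
    have hWy := (hW.hasContinuousDerivOn_mulVec hsub hy).continuousOn
    refine (ContinuousOn.intervalIntegrable_of_Icc hcd ?_).congr_uIoo
      fun z hz => (hE_eq z (uIoo_of_le hcd ▸ hz)).symm
    simp only [dotProduct]
    exact continuousOn_finsetSum _ fun i _ =>
      (hy.apply i).continuousOn.mul ((continuous_apply i).comp_continuousOn hWy)
  have hQy := (hQ.hasContinuousDerivOn_mulVec hsub hy).continuousOn
  have hσF : IntervalIntegrable (fun z => ratioDeriv W W' Q Q' z * flux Q y z) volume c d :=
    (((hQ.ratioDeriv_continuousOn hW hm).mono hsub).mul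
      (((continuous_apply 0).comp_continuousOn hQy).mul
        ((continuous_apply 1).comp_continuousOn hQy))).intervalIntegrable_of_Icc hcd
  have hflux : ∀ e, W e 0 0 / Q e 0 0 = 1 ∨ flux Q y e = 0 →
      W e 0 0 / Q e 0 0 * flux Q y e = flux Q y e := by
    rintro e (h | h) <;> simp [h]
  refine ⟨hf₀, hfₗ, hE, ?_⟩
  rw [hf₀_eq, hfₗ_eq, hflux c hc, hflux d hd, hQ_div_self c (left_mem_Icc.2 hcd),
    hQ_div_self d (right_mem_Icc.2 hcd)]
  simp only [ratioDeriv_self, zero_mul, intervalIntegral.integral_zero, one_mul, zero_add,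
    ← intervalIntegral.integral_const_mul]
  have hσF_le := integral_mono_on_of_le_Ioo hcd hσF (hE.const_mul (K * M ^ 2 / (2 * m)))
    fun z hz => (hE_eq z hz).symm ▸
      hQ.ratioDeriv_mul_flux_le hW hm (hsub (Ioo_subset_Icc_self hz)) (hK z hz)
  linarith

theorem intervalBound_self (hQ : AdmissibleCoeff a b m M Q Q') (hm : 0 < m) {K : ℝ}
    (hK : 0 ≤ K) (hcd : c ≤ d) (hsub : Icc c d ⊆ Icc a b)
    (hy : HasContinuousDerivOn y y' (Icc c d)) {Wₗ : ℝ → Matrix (Fin 2) (Fin 2) ℝ}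
    (hpt : ∀ z ∈ Ioo c d, x z = y z ∧ A z = P1 *ᵥ (Q' z *ᵥ y z + Q z *ᵥ y' z) ∧
      Wₗ z = Q z ∧ W₀ z = Q z) :
    IntervalBound (K * M ^ 2 / (2 * m)) (fun z => x z ⬝ᵥ W₀ z *ᵥ A z)
      (fun z => x z ⬝ᵥ Wₗ z *ᵥ A z) (fun z => x z ⬝ᵥ W₀ z *ᵥ x z) c d := by
  have hQ_div_self : ∀ z ∈ Icc c d, ∀ i, Q z i i / Q z i i = 1 :=
    fun z hz i => div_self (hQ.apply_pos hm (hsub hz) i).ne'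
  refine hQ.intervalBound hQ hm hcd hsub hy (fun z hz => ?_) (fun z _ => ?_)
    (.inl (hQ_div_self c (left_mem_Icc.2 hcd) 0)) (.inl (hQ_div_self d (right_mem_Icc.2 hcd) 0)) hpt
  · rw [hQ_div_self z (Ioo_subset_Icc_self hz), hQ_div_self z (Ioo_subset_Icc_self hz)]
  · rwa [ratioDeriv_self, abs_zero]

end AdmissibleCoeff

theorem intervalBound_interface {a b m M K l : ℝ} {Qm Qp Qm' Qp' : ℝ → Matrix (Fin 2) (Fin 2) ℝ}
    (hQm : AdmissibleCoeff a b m M Qm Qm') (hQp : AdmissibleCoeff a b m M Qp Qp') (hm : 0 < m)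
    (ha : a < 0) (hb : 0 < b) (hratio₀ : Qp 0 0 0 / Qm 0 0 0 = 1)
    (hratio : ∀ z ∈ Icc a b, Qp z 0 0 / Qm z 0 0 = Qp z 1 1 / Qm z 1 1) (hK : 0 ≤ K)
    (hKmp : ∀ z ∈ Icc a b, |ratioDeriv Qp Qp' Qm Qm' z| ≤ K)
    (hKpm : ∀ z ∈ Icc a b, |ratioDeriv Qm Qm' Qp Qp' z| ≤ K)
    (hl : l ∈ Ioo a b) {x xm xp xm' xp' : ℝ → Fin 2 → ℝ}
    (hxm : ∀ z ∈ Ico a l, x z = xm z) (hxp : ∀ z ∈ Ioc l b, x z = xp z)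
    (hdm : HasContinuousDerivOn xm xm' (Icc a l)) (hdp : HasContinuousDerivOn xp xp' (Icc l b))
    (hifp : (Qp l *ᵥ xp l) 1 = 0) (hifm : (Qm l *ᵥ xm l) 1 = 0) :
    IntervalBound (K * M ^ 2 / (2 * m))
      (fun z => x z ⬝ᵥ (if z < 0 then Qm z else Qp z) *ᵥ Aop Qm Qp Qm' Qp' xm xp xm' xp' l z)
      (fun z => x z ⬝ᵥ (if z < l then Qm z else Qp z) *ᵥ Aop Qm Qp Qm' Qp' xm xp xm' xp' l z)
      (fun z => x z ⬝ᵥ (if z < 0 then Qm z else Qp z) *ᵥ x z) a b := by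
  obtain ⟨hal, hlb⟩ := hl
  have has : a ≤ min 0 l := le_min ha.le hal.le
  have htb : max 0 l ≤ b := max_le hb.le hlb.le
  have hfm : flux Qm xm l = 0 := by simp [flux, hifm]
  have hfp : flux Qp xp l = 0 := by simp [flux, hifp]
  -- Of the two middle pieces `[min 0 l, l]` and `[l, max 0 l]` one is degenerate; on the other
  -- `Q_0` is the coefficient of the opposite side.
  refine ((?_ : IntervalBound _ _ _ _ a (min 0 l)).trans ?_).trans
    ((?_ : IntervalBound _ _ _ _ l (max 0 l)).trans ?_)
  · exact hQm.intervalBound_self hm hK has (Icc_subset_Icc le_rfl ((min_le_left 0 l).trans hb.le))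
      (hdm.mono (Icc_subset_Icc le_rfl (min_le_right 0 l))) fun z hz =>
        have hzl : z < l := hz.2.trans_le (min_le_right 0 l)
        ⟨hxm z ⟨hz.1.le, hzl⟩, if_pos hzl, if_pos hzl, if_pos (hz.2.trans_le (min_le_left 0 l))⟩
  · exact hQm.intervalBound hQp hm (min_le_right 0 l)
      (Icc_subset_Icc has hlb.le) (hdm.mono (Icc_subset_Icc has le_rfl))
      (fun z hz => hratio z ⟨has.trans hz.1.le, hz.2.le.trans hlb.le⟩)
      (fun z hz => hKmp z ⟨has.trans hz.1.le, hz.2.le.trans hlb.le⟩)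
      (by rcases min_choice 0 l with h | h <;> rw [h]; exacts [.inl hratio₀, .inr hfm]) (.inr hfm)
      fun z hz =>
        have hz0 : 0 < z := (min_lt_iff.1 hz.1).resolve_right hz.2.not_gt
        ⟨hxm z ⟨has.trans hz.1.le, hz.2⟩, if_pos hz.2, if_pos hz.2, if_neg hz0.not_gt⟩
  · exact hQp.intervalBound hQm hm (le_max_right 0 l)
      (Icc_subset_Icc hal.le htb) (hdp.mono (Icc_subset_Icc le_rfl htb))
      (fun z hz => by
        rw [← inv_div, hratio z ⟨hal.le.trans hz.1.le, hz.2.le.trans htb⟩, inv_div])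
      (fun z hz => hKpm z ⟨hal.le.trans hz.1.le, hz.2.le.trans htb⟩) (.inr hfp)
      (by
        rcases max_choice 0 l with h | h <;> rw [h]
        exacts [.inl (by rw [← inv_div, hratio₀, inv_one]), .inr hfp])
      fun z hz =>
        have hz0 : z < 0 := (lt_max_iff.1 hz.2).resolve_right hz.1.not_gt
        ⟨hxp z ⟨hz.1, hz.2.le.trans htb⟩, if_neg hz.1.not_gt, if_neg hz.1.not_gt, if_pos hz0⟩
  · exact hQp.intervalBound_self hm hK htb (Icc_subset_Icc (ha.le.trans (le_max_left 0 l)) le_rfl)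
      (hdp.mono (Icc_subset_Icc (le_max_right 0 l) le_rfl)) fun z hz =>
        have hlz : ¬ z < l := ((le_max_right 0 l).trans_lt hz.1).not_gt
        ⟨hxp z ⟨(le_max_right 0 l).trans_lt hz.1, hz.2.le⟩, if_neg hlz, if_neg hlz,
          if_neg ((le_max_left 0 l).trans_lt hz.1).not_gt⟩

/-- quasi-dissipativity estimate of Theorem 3.  Let `a < 0 < b` and let
`Q⁻, Q⁺ ∈ C¹([a,b], ℝ^{2×2})` be diagonal with `m I₂ ≤ Q^± ≤ M I₂` (`0 < m ≤ M`),
satisfying the ratio conditions of assumption (A1).  Then there is `ω > 0`, independent of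
the interface position, such that for every `l ∈ (a,b)` and every `x` piecewise `C¹` with
respect to `l` satisfying the interface condition `(Q_l x)₂(l⁺) = 0 = (Q_l x)₂(l⁻)` and the
frozen-interface dissipativity `⟨Ax, x⟩_{Q_l} ≤ 0`, one has `⟨Ax, x⟩_{Q_0} ≤ ω ‖x‖_{Q_0}²`,
where `⟨u,v⟩_Q = (1/2)∫_a^b vᵀ Q u` and `(Ax)(z) = P₁ (d/dz)(Q_l x)(z)` piecewise. -/
theorem stmt12 (a b m M : ℝ) (ha : a < 0) (hb : 0 < b) (hm : 0 < m) (hmM : m ≤ M)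
    (Qm Qp Qm' Qp' : ℝ → Matrix (Fin 2) (Fin 2) ℝ)
    (hQmd : ∀ i j, ∀ z ∈ Set.Icc a b,
      HasDerivWithinAt (fun ζ => Qm ζ i j) (Qm' z i j) (Set.Icc a b) z)
    (hQm' : ∀ i j, ContinuousOn (fun z => Qm' z i j) (Set.Icc a b))
    (hQpd : ∀ i j, ∀ z ∈ Set.Icc a b,
      HasDerivWithinAt (fun ζ => Qp ζ i j) (Qp' z i j) (Set.Icc a b) z)
    (hQp' : ∀ i j, ContinuousOn (fun z => Qp' z i j) (Set.Icc a b))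
    (hdiag : ∀ z ∈ Set.Icc a b, (Qm z).IsDiag ∧ (Qp z).IsDiag)
    (hbound : ∀ z ∈ Set.Icc a b,
      (Qm z - m • (1 : Matrix (Fin 2) (Fin 2) ℝ)).PosSemidef ∧
      (M • (1 : Matrix (Fin 2) (Fin 2) ℝ) - Qm z).PosSemidef ∧
      (Qp z - m • (1 : Matrix (Fin 2) (Fin 2) ℝ)).PosSemidef ∧
      (M • (1 : Matrix (Fin 2) (Fin 2) ℝ) - Qp z).PosSemidef)
    (hratio0 : Qp 0 0 0 / Qm 0 0 0 = 1)
    (hratio : ∀ z ∈ Set.Icc a b, Qp z 0 0 / Qm z 0 0 = Qp z 1 1 / Qm z 1 1) :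
    ∃ ω > 0, ∀ l ∈ Set.Ioo a b, ∀ x xm xp xm' xp' : ℝ → Fin 2 → ℝ,
      (∀ z ∈ Set.Ico a l, x z = xm z) →
      (∀ z ∈ Set.Ioc l b, x z = xp z) →
      (∀ z ∈ Set.Icc a l, HasDerivWithinAt xm (xm' z) (Set.Icc a l) z) →
      ContinuousOn xm' (Set.Icc a l) →
      (∀ z ∈ Set.Icc l b, HasDerivWithinAt xp (xp' z) (Set.Icc l b) z) →
      ContinuousOn xp' (Set.Icc l b) →
      -- interface condition `(Q_l x)₂(l⁺) = 0 = (Q_l x)₂(l⁻)`: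
      ((Qp l).mulVec (xp l)) 1 = 0 →
      ((Qm l).mulVec (xm l)) 1 = 0 →
      -- frozen-interface dissipativity `⟨Ax, x⟩_{Q_l} ≤ 0`:
      (1/2) * (∫ z in a..b, x z ⬝ᵥ ((if z < l then Qm z else Qp z)).mulVec
          (Aop Qm Qp Qm' Qp' xm xp xm' xp' l z)) ≤ 0 →
      -- conclusion `⟨Ax, x⟩_{Q_0} ≤ ω ‖x‖_{Q_0}²`:
      (1/2) * (∫ z in a..b, x z ⬝ᵥ ((if z < 0 then Qm z else Qp z)).mulVec
          (Aop Qm Qp Qm' Qp' xm xp xm' xp' l z))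
        ≤ ω * ((1/2) * ∫ z in a..b,
            x z ⬝ᵥ ((if z < 0 then Qm z else Qp z)).mulVec (x z)) := by
  have hQm : AdmissibleCoeff a b m M Qm Qm' := ⟨fun i j => ⟨hQmd i j, hQm' i j⟩,
    fun z hz => (hdiag z hz).1, fun z hz => (hbound z hz).1, fun z hz => (hbound z hz).2.1⟩
  have hQp : AdmissibleCoeff a b m M Qp Qp' := ⟨fun i j => ⟨hQpd i j, hQp' i j⟩,
    fun z hz => (hdiag z hz).2, fun z hz => (hbound z hz).2.2.1, fun z hz => (hbound z hz).2.2.2⟩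
  obtain ⟨K₁, hK₁⟩ :=
    isCompact_Icc.exists_bound_of_continuousOn (hQm.ratioDeriv_continuousOn hQp hm)
  obtain ⟨K₂, hK₂⟩ :=
    isCompact_Icc.exists_bound_of_continuousOn (hQp.ratioDeriv_continuousOn hQm hm)
  have hK : 0 < max (max K₁ K₂) 1 := lt_max_of_lt_right one_pos
  have hM : 0 < M := hm.trans_le hmM
  refine ⟨max (max K₁ K₂) 1 * M ^ 2 / (2 * m), by positivity,
    fun l hl x xm xp xm' xp' hxm hxp hdm hcm' hdp hcp' hifp hifm hdiss => ?_⟩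
  obtain ⟨-, -, -, hle⟩ := intervalBound_interface hQm hQp hm ha hb hratio0 hratio hK.le
    (fun z hz => (hK₁ z hz).trans ((le_max_left _ _).trans (le_max_left _ _)))
    (fun z hz => (hK₂ z hz).trans ((le_max_right _ _).trans (le_max_left _ _)))
    hl hxm hxp ⟨hdm, hcm'⟩ ⟨hdp, hcp'⟩ hifp hifm
  linarith
end
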